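/- arXiv:2410.03164 — 3 statements merged into one kernel-verified Lean document; each statement's English description precedes it below -/
import Mathlib

section
/- For all nonnegative real numbers a and b and any real exponent p ≥ 2, one has (a+b)^p ≥ a^p + b^p + (p-1)(a^{p-1} b + a b^{p-1}). -/
/-!
Write `(a + b)^p = a (a + b)^(p-1) + b (a + b)^(p-1)` and bound each `(a + b)^(p-1)` from below
by the tangent line of the convex function `t ↦ t^(p-1)` (Bernoulli's inequality), taken at `a`
for the first term and at `b` for the second.
-/

namespace Real

lemma mul_rpow_sub_one {x r : ℝ} (hx : 0 ≤ x) (hr : r ≠ 0) : x * x ^ (r - 1) = x ^ r := by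
  rw [mul_comm, ← rpow_add_one' hx (by simpa using hr), sub_add_cancel]

lemma rpow_add_mul_rpow_sub_one_mul_le_add_rpow {x y q : ℝ} (hx : 0 ≤ x) (hy : 0 ≤ y)
    (hq : 1 ≤ q) : x ^ q + q * x ^ (q - 1) * y ≤ (x + y) ^ q := by
  rcases hx.eq_or_lt with rfl | hx
  · rcases hq.eq_or_lt with rfl | hq
    · simp
    · rw [zero_rpow (by linarith), zero_rpow (by linarith)]
      simpa using rpow_nonneg hy q
  have bernoulli := one_add_mul_self_le_rpow_one_add
    (le_trans (by norm_num) (div_nonneg hy hx.le)) hq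
  calc x ^ q + q * x ^ (q - 1) * y = x ^ q * (1 + q * (y / x)) := by
        rw [rpow_sub_one hx.ne']
        field_simp
    _ ≤ x ^ q * (1 + y / x) ^ q := by gcongr
    _ = (x + y) ^ q := by
        rw [← mul_rpow hx.le (by positivity)]
        field_simp

end Real

open Real in
theorem sum_rpow_mixed_lower_bound (a b : ℝ) (ha : 0 ≤ a) (hb : 0 ≤ b)
    (p : ℝ) (hp : 2 ≤ p) :
    a ^ p + b ^ p + (p - 1) * (a ^ (p - 1) * b + a * b ^ (p - 1)) ≤ (a + b) ^ p := by
  have hq : 1 ≤ p - 1 := by linarith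
  have tangent_a := rpow_add_mul_rpow_sub_one_mul_le_add_rpow ha hb hq
  have tangent_b := rpow_add_mul_rpow_sub_one_mul_le_add_rpow hb ha hq
  rw [add_comm b a] at tangent_b
  calc a ^ p + b ^ p + (p - 1) * (a ^ (p - 1) * b + a * b ^ (p - 1))
      = a * (a ^ (p - 1) + (p - 1) * a ^ (p - 1 - 1) * b)
        + b * (b ^ (p - 1) + (p - 1) * b ^ (p - 1 - 1) * a) := by
        have hap := mul_rpow_sub_one ha (r := p) (by linarith)
        have hbp := mul_rpow_sub_one hb (r := p) (by linarith)
        have hap' := mul_rpow_sub_one ha (r := p - 1) (by linarith)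
        have hbp' := mul_rpow_sub_one hb (r := p - 1) (by linarith)
        linear_combination -hap - hbp - (p - 1) * b * hap' - (p - 1) * a * hbp'
    _ ≤ a * (a + b) ^ (p - 1) + b * (a + b) ^ (p - 1) := by gcongr
    _ = (a + b) ^ p := by rw [← add_mul, mul_rpow_sub_one (by positivity) (by linarith)]
end

section
/- Let N ≥ 3 be an integer and set p = 2N/(N-2). For every t ∈ [0,1] with t ≠ 1/2, one has (t² + (1-t)²)^{N/2} / (t^p + (1-t)^p)^{(N-2)/2} < 2, with equality when t = 1/2. -/
theorem convex_combination_energy_ratio_lt_two (N : ℕ) (hN : 3 ≤ N) :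
    (∀ t : ℝ, t ∈ Set.Icc (0:ℝ) 1 → t ≠ 1/2 →
      (t ^ 2 + (1 - t) ^ 2) ^ ((N : ℝ) / 2) /
        ((t ^ ((2 * (N : ℝ)) / ((N : ℝ) - 2)) + (1 - t) ^ ((2 * (N : ℝ)) / ((N : ℝ) - 2)))
          ^ (((N : ℝ) - 2) / 2)) < 2) ∧
    ((1/2 : ℝ) ^ 2 + (1 - 1/2 : ℝ) ^ 2) ^ ((N : ℝ) / 2) /
        (((1/2 : ℝ) ^ ((2 * (N : ℝ)) / ((N : ℝ) - 2)) + (1 - 1/2 : ℝ) ^ ((2 * (N : ℝ)) / ((N : ℝ) - 2)))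
          ^ (((N : ℝ) - 2) / 2)) = 2 := by
  have hn : (3:ℝ) ≤ (N:ℝ) := by exact_mod_cast hN
  set n : ℝ := (N:ℝ) with hn_def
  have h2n : (0:ℝ) < n - 2 := by linarith
  set p : ℝ := 2 * n / (n - 2) with hp_def
  set q : ℝ := n / (n - 2) with hq_def
  have hq1 : 1 < q := by
    rw [hq_def, lt_div_iff₀ h2n]; linarith
  have hpq : p = 2 * q := by rw [hp_def, hq_def]; ring
  constructor
  · intro t ht hne
    obtain ⟨ht0, ht1⟩ := ht
    have hs0 : (0:ℝ) ≤ 1 - t := by linarith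
    -- key: midpoint strict convexity
    have hxy : t ^ 2 ≠ (1 - t) ^ 2 := fun h => hne (by linear_combination h / 2)
    have hconv := (strictConvexOn_rpow hq1).2 (Set.mem_Ici.2 (sq_nonneg t))
      (Set.mem_Ici.2 (sq_nonneg (1 - t))) hxy (by norm_num : (0:ℝ) < 1/2)
      (by norm_num : (0:ℝ) < 1/2) (by norm_num)
    simp only [smul_eq_mul] at hconv
    have hsq : ∀ x : ℝ, 0 ≤ x → (x ^ 2) ^ q = x ^ p := by
      intro x hx
      rw [← Real.rpow_natCast x 2, ← Real.rpow_mul hx, hpq]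
      norm_num [mul_comm]
    rw [hsq t ht0, hsq (1 - t) hs0] at hconv
    have h1 : ((t ^ 2 + (1 - t) ^ 2) / 2) ^ q < (t ^ p + (1 - t) ^ p) / 2 := by
      calc ((t ^ 2 + (1 - t) ^ 2) / 2) ^ q
          = (1/2 * t ^ 2 + 1/2 * (1 - t) ^ 2) ^ q := by ring_nf
        _ < 1/2 * t ^ p + 1/2 * (1 - t) ^ p := hconv
        _ = (t ^ p + (1 - t) ^ p) / 2 := by ring
    -- raise to power (n-2)/2
    have he : (0:ℝ) < (n - 2) / 2 := by linarith
    have hA0 : (0:ℝ) ≤ (t ^ 2 + (1 - t) ^ 2) / 2 := by positivity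
    have h2 : (((t ^ 2 + (1 - t) ^ 2) / 2) ^ q) ^ ((n - 2) / 2)
        < ((t ^ p + (1 - t) ^ p) / 2) ^ ((n - 2) / 2) :=
      Real.rpow_lt_rpow (Real.rpow_nonneg hA0 q) h1 he
    rw [← Real.rpow_mul hA0] at h2
    have hqe : q * ((n - 2) / 2) = n / 2 := by
      rw [hq_def]; field_simp
    rw [hqe] at h2
    -- split divisions
    have hD0 : (0:ℝ) < t ^ p + (1 - t) ^ p := by
      rcases eq_or_lt_of_le ht0 with h | h
      · rw [← h]
        norm_num
        rw [Real.zero_rpow (by rw [hp_def]; positivity)]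
        norm_num
      · have h1p : (0:ℝ) < t ^ p := Real.rpow_pos_of_pos h p
        have h2p : (0:ℝ) ≤ (1 - t) ^ p := Real.rpow_nonneg hs0 p
        linarith
    have hnum0 : (0:ℝ) ≤ t ^ 2 + (1 - t) ^ 2 := by positivity
    rw [Real.div_rpow hnum0 (by norm_num : (0:ℝ) ≤ 2),
        Real.div_rpow hD0.le (by norm_num : (0:ℝ) ≤ 2)] at h2
    have hden : (0:ℝ) < (t ^ p + (1 - t) ^ p) ^ ((n - 2) / 2) :=
      Real.rpow_pos_of_pos hD0 _
    rw [div_lt_iff₀ hden]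
    have h2n2 : (0:ℝ) < (2:ℝ) ^ ((n - 2) / 2) := Real.rpow_pos_of_pos two_pos _
    have h2nn : (0:ℝ) < (2:ℝ) ^ (n / 2) := Real.rpow_pos_of_pos two_pos _
    rw [div_lt_div_iff₀ h2nn h2n2] at h2
    have h2r : (2:ℝ) ^ (n / 2) = 2 * (2:ℝ) ^ ((n - 2) / 2) := by
      rw [show n / 2 = 1 + (n - 2) / 2 by ring, Real.rpow_add two_pos, Real.rpow_one]
    nlinarith [hden, h2n2]
  · have h12 : ((1:ℝ)/2) ^ 2 + ((1:ℝ) - 1/2) ^ 2 = 1/2 := by norm_num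
    rw [show (1:ℝ) - 1/2 = 1/2 by norm_num] at *
    rw [h12]
    have hhalf : ∀ x : ℝ, ((1:ℝ)/2) ^ x = (2:ℝ) ^ (-x) := by
      intro x
      rw [Real.rpow_neg (by norm_num : (0:ℝ) ≤ 2),
        show (1:ℝ)/2 = 2⁻¹ by norm_num, Real.inv_rpow (by norm_num : (0:ℝ) ≤ 2)]
    rw [hhalf, hhalf]
    rw [show (2:ℝ) ^ (-p) + 2 ^ (-p) = 2 ^ (1 + -p) by
      rw [Real.rpow_add two_pos, Real.rpow_one]; ring]
    rw [← Real.rpow_mul (by norm_num : (0:ℝ) ≤ 2),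
        ← Real.rpow_sub two_pos]
    have : -(n / 2) - (1 + -p) * ((n - 2) / 2) = 1 := by
      rw [hp_def]; field_simp; ring
    rw [this, Real.rpow_one]
end

section
/- Let N ≥ 3, y ∈ B(0,1) with d = dist(y, ∂B(0,1)), and ε > 0. Then ∫_{B(y,d)} (V^{ε,y})^{(N+2)/(N-2)} dx = ε^{N/2−1} ∫_{ℝ^N} V^{(N+2)/(N-2)} dx + O(ε^{(N+2)/2}/d²). -/
open Metric MeasureTheory

noncomputable def bubble (N : ℕ) (x : EuclideanSpace ℝ (Fin N)) : ℝ :=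
  ((N : ℝ) * ((N : ℝ) - 2)) ^ (((N : ℝ) - 2) / 4) *
    (1 + ‖x‖ ^ 2) ^ ((2 - (N : ℝ)) / 2)

noncomputable def bubbleScaled (N : ℕ) (ε : ℝ) (y x : EuclideanSpace ℝ (Fin N)) : ℝ :=
  ε ^ ((2 - (N : ℝ)) / 2) * bubble N (ε⁻¹ • (x - y))

/-!
Translating by `y` and dilating by `ε` maps `B(y, d)` onto `B(0, d/ε)`, and the exponents are
such that `∫_{B(y,d)} (V^{ε,y})^{(N+2)/(N-2)} = ε^{N/2-1} ∫_{B(0,d/ε)} V^{(N+2)/(N-2)}` exactly.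
The error is therefore `ε^{N/2-1}` times the tail of `V^{(N+2)/(N-2)} ∝ (1+|z|²)^{-(N+2)/2}`
outside `B(0, R)`, `R = d/ε`, which polar coordinates bound by a multiple of
`∫_R^∞ t^{N-1} t^{-N-2} dt = R^{-2}/2`.
-/

open Set Module
open scoped Pointwise

theorem integral_Ioi_pow_mul_rpow_one_add_sq_le (k : ℕ) {r : ℝ} (hr : (k : ℝ) + 1 < r) {R : ℝ}
    (hR : 0 < R) :
    ∫ t in Ioi R, t ^ k * (1 + t ^ 2) ^ (-r / 2) ≤ R ^ ((k : ℝ) + 1 - r) / (r - (k + 1)) := by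
  have hpoint : ∀ t ∈ Ioi R, t ^ k * (1 + t ^ 2) ^ (-r / 2) ≤ t ^ ((k : ℝ) - r) := by
    intro t ht
    have ht0 : 0 < t := hR.trans ht
    calc t ^ k * (1 + t ^ 2) ^ (-r / 2) ≤ t ^ k * (t ^ 2) ^ (-r / 2) := by
          gcongr _ * ?_
          exact Real.rpow_le_rpow_of_nonpos (by positivity) (by linarith) (by linarith)
      _ = t ^ ((k : ℝ) - r) := by
          rw [← Real.rpow_natCast, ← Real.rpow_natCast t 2, ← Real.rpow_mul ht0.le,
            ← Real.rpow_add ht0]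
          ring_nf
  have hint : IntegrableOn (fun t : ℝ => t ^ ((k : ℝ) - r)) (Ioi R) :=
    integrableOn_Ioi_rpow_of_lt (by linarith) hR
  calc ∫ t in Ioi R, t ^ k * (1 + t ^ 2) ^ (-r / 2)
      ≤ ∫ t in Ioi R, t ^ ((k : ℝ) - r) := by
        refine setIntegral_mono_on (hint.mono' (by fun_prop) ?_) hint measurableSet_Ioi hpoint
        filter_upwards [ae_restrict_mem measurableSet_Ioi] with t ht
        have ht0 : 0 < t := hR.trans ht
        rw [Real.norm_of_nonneg (by positivity)]
        exact hpoint t ht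
    _ = R ^ ((k : ℝ) + 1 - r) / (r - (k + 1)) := by
        rw [integral_Ioi_rpow_of_lt (by linarith) hR, ← neg_div_neg_eq, neg_neg]
        ring_nf

section Haar

variable {E F : Type*} [NormedAddCommGroup E] [NormedSpace ℝ E] [FiniteDimensional ℝ E]
  [MeasurableSpace E] [BorelSpace E] (μ : Measure E) [μ.IsAddHaarMeasure]
  [NormedAddCommGroup F] [NormedSpace ℝ F]

theorem setIntegral_ball_comp_smul_sub (f : E → F) (y : E) {ε : ℝ} (hε : 0 < ε) (d : ℝ) :
    ∫ x in ball y d, f (ε⁻¹ • (x - y)) ∂μ = ε ^ finrank ℝ E • ∫ z in ball 0 (d / ε), f z ∂μ := by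
  have htranslate : ∫ x in ball y d, f (ε⁻¹ • (x - y)) ∂μ = ∫ x in ball 0 d, f (ε⁻¹ • x) ∂μ := by
    have hpre : (· - y) ⁻¹' ball (0 : E) d = ball y d := by
      ext x; simp [dist_eq_norm]
    rw [← integral_indicator measurableSet_ball, ← integral_indicator measurableSet_ball,
      ← integral_sub_right_eq_self (μ := μ) ((ball (0 : E) d).indicator _) y, ← hpre]
    rfl
  have hball : ε⁻¹ • ball (0 : E) d = ball 0 (d / ε) := by
    rw [_root_.smul_ball (inv_ne_zero hε.ne'), smul_zero,
      Real.norm_of_nonneg (inv_nonneg.2 hε.le), inv_mul_eq_div]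
  rw [htranslate, Measure.setIntegral_comp_smul_of_pos μ f _ (inv_pos.2 hε), hball, inv_pow,
    inv_inv]

theorem setIntegral_compl_ball_fun_norm [Nontrivial E] {R : ℝ} (hR : 0 < R) (f : ℝ → F) :
    ∫ x in (ball (0 : E) R)ᶜ, f ‖x‖ ∂μ
      = finrank ℝ E • μ.real (ball 0 1) • ∫ t in Ioi R, t ^ (finrank ℝ E - 1) • f t := by
  have hlhs : ∫ x in (ball (0 : E) R)ᶜ, f ‖x‖ ∂μ = ∫ x, (Ici R).indicator f ‖x‖ ∂μ := by
    rw [← integral_indicator measurableSet_ball.compl]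
    congr 1 with x
    by_cases hx : R ≤ ‖x‖ <;> simp [indicator, hx]
  have hrhs : ∫ t in Ioi 0, t ^ (finrank ℝ E - 1) • (Ici R).indicator f t
      = ∫ t in Ioi R, t ^ (finrank ℝ E - 1) • f t := by
    simp_rw [← indicator_smul_apply (Ici R) (fun t : ℝ => t ^ (finrank ℝ E - 1)) f]
    rw [integral_indicator measurableSet_Ici, Measure.restrict_restrict measurableSet_Ici,
      inter_eq_self_of_subset_left (Ici_subset_Ioi.2 hR), integral_Ici_eq_integral_Ioi]
  rw [hlhs, integral_fun_norm_addHaar, hrhs]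

theorem setIntegral_compl_ball_rpow_one_add_norm_sq_le [Nontrivial E] {r : ℝ}
    (hr : (finrank ℝ E : ℝ) < r) {R : ℝ} (hR : 0 < R) :
    ∫ x in (ball (0 : E) R)ᶜ, (1 + ‖x‖ ^ 2) ^ (-r / 2) ∂μ
      ≤ finrank ℝ E * μ.real (ball 0 1) / (r - finrank ℝ E) * R ^ ((finrank ℝ E : ℝ) - r) := by
  have hdim : ((finrank ℝ E - 1 : ℕ) : ℝ) + 1 = finrank ℝ E := by
    rw [← Nat.cast_add_one, Nat.sub_add_cancel finrank_pos]
  have hradial := integral_Ioi_pow_mul_rpow_one_add_sq_le (finrank ℝ E - 1) (hdim ▸ hr) hR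
  rw [hdim] at hradial
  calc ∫ x in (ball (0 : E) R)ᶜ, (1 + ‖x‖ ^ 2) ^ (-r / 2) ∂μ
      = finrank ℝ E * μ.real (ball 0 1) *
          ∫ t in Ioi R, t ^ (finrank ℝ E - 1) * (1 + t ^ 2) ^ (-r / 2) := by
        rw [setIntegral_compl_ball_fun_norm μ hR (fun t => (1 + t ^ 2) ^ (-r / 2))]
        simp only [nsmul_eq_mul, smul_eq_mul, mul_assoc]
    _ ≤ finrank ℝ E * μ.real (ball 0 1) *
          (R ^ ((finrank ℝ E : ℝ) - r) / (r - finrank ℝ E)) := by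
        gcongr
    _ = _ := by ring

end Haar

section Bubble

variable {N : ℕ}

theorem bubble_nonneg (hN : 2 ≤ N) (x : EuclideanSpace ℝ (Fin N)) : 0 ≤ bubble N x := by
  have hN' : (2 : ℝ) ≤ N := by exact_mod_cast hN
  unfold bubble
  have : (0 : ℝ) ≤ N * (N - 2) := by nlinarith
  positivity

theorem bubble_rpow_critical (hN : 2 < N) (x : EuclideanSpace ℝ (Fin N)) :
    bubble N x ^ (((N : ℝ) + 2) / ((N : ℝ) - 2))
      = ((N : ℝ) * ((N : ℝ) - 2)) ^ (((N : ℝ) + 2) / 4) *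
          (1 + ‖x‖ ^ 2) ^ (-((N : ℝ) + 2) / 2) := by
  have hN' : (2 : ℝ) < N := by exact_mod_cast hN
  have hbase : (0 : ℝ) ≤ N * (N - 2) := by nlinarith
  have hne : (N : ℝ) - 2 ≠ 0 := by linarith
  rw [bubble, Real.mul_rpow (by positivity) (by positivity), ← Real.rpow_mul hbase,
    ← Real.rpow_mul (by positivity)]
  congr 2 <;> field_simp
  ring

theorem integrable_bubble_rpow_critical (hN : 2 < N) :
    Integrable fun x : EuclideanSpace ℝ (Fin N) =>
      bubble N x ^ (((N : ℝ) + 2) / ((N : ℝ) - 2)) := by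
  simp only [bubble_rpow_critical hN]
  exact (integrable_rpow_neg_one_add_norm_sq (by simp)).const_mul _

theorem setIntegral_compl_ball_bubble_rpow_critical_le (hN : 2 < N) :
    ∃ C, ∀ R > 0, ∫ z in (ball (0 : EuclideanSpace ℝ (Fin N)) R)ᶜ,
      bubble N z ^ (((N : ℝ) + 2) / ((N : ℝ) - 2)) ≤ C / R ^ 2 := by
  have : Nontrivial (Fin N) := Fin.nontrivial_iff_two_le.2 hN.le
  have hN' : (2 : ℝ) < N := by exact_mod_cast hN
  have hbase : (0 : ℝ) ≤ N * (N - 2) := by nlinarith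
  refine ⟨((N : ℝ) * ((N : ℝ) - 2)) ^ (((N : ℝ) + 2) / 4) *
    (N * volume.real (ball (0 : EuclideanSpace ℝ (Fin N)) 1) / 2), fun R hR => ?_⟩
  have htail := setIntegral_compl_ball_rpow_one_add_norm_sq_le
    (volume : Measure (EuclideanSpace ℝ (Fin N))) (r := N + 2) (by simp) hR
  simp only [finrank_euclideanSpace_fin, add_sub_cancel_left, sub_add_cancel_left] at htail
  rw [Real.rpow_neg hR.le, Real.rpow_two, ← div_eq_mul_inv] at htail
  simp only [bubble_rpow_critical hN]
  rw [integral_const_mul, mul_div_assoc]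
  exact mul_le_mul_of_nonneg_left htail (by positivity)

theorem bubbleScaled_rpow (hN : 2 ≤ N) {ε : ℝ} (hε : 0 ≤ ε) (q : ℝ)
    (y x : EuclideanSpace ℝ (Fin N)) :
    bubbleScaled N ε y x ^ q = ε ^ ((2 - (N : ℝ)) / 2 * q) * bubble N (ε⁻¹ • (x - y)) ^ q := by
  rw [bubbleScaled, Real.mul_rpow (by positivity) (bubble_nonneg hN _), ← Real.rpow_mul hε]

theorem setIntegral_ball_bubbleScaled_rpow_critical (hN : 2 < N) (y : EuclideanSpace ℝ (Fin N))
    {ε : ℝ} (hε : 0 < ε) (d : ℝ) :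
    ∫ x in ball y d, bubbleScaled N ε y x ^ (((N : ℝ) + 2) / ((N : ℝ) - 2))
      = ε ^ ((N : ℝ) / 2 - 1) *
          ∫ z in ball 0 (d / ε), bubble N z ^ (((N : ℝ) + 2) / ((N : ℝ) - 2)) := by
  have hne : (N : ℝ) - 2 ≠ 0 := by
    have hN' : (2 : ℝ) < N := by exact_mod_cast hN
    linarith
  simp only [bubbleScaled_rpow hN.le hε.le]
  rw [integral_const_mul,
    setIntegral_ball_comp_smul_sub _ (fun z => bubble N z ^ (((N : ℝ) + 2) / ((N : ℝ) - 2))) y hε,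
    finrank_euclideanSpace_fin, smul_eq_mul, ← mul_assoc, ← Real.rpow_natCast,
    ← Real.rpow_add hε]
  congr 2
  field_simp
  ring

end Bubble

/-- `∫_{B(y,d)} (V^{ε,y})^{2*-1} = ε^{N/2-1} ∫_{ℝ^N} V^{2*-1} + O(ε^{(N+2)/2}/d²)`,
where `d = 1 - |y|` is the distance of `y` to the boundary of the unit ball. -/
theorem bubble_critical_minus_one_expansion (N : ℕ) (hN : 3 ≤ N) :
    ∃ C > 0, ∀ y : EuclideanSpace ℝ (Fin N), ‖y‖ < 1 → ∀ ε : ℝ, 0 < ε →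
      |(∫ x in ball y (1 - ‖y‖),
          (bubbleScaled N ε y x) ^ (((N : ℝ) + 2) / ((N : ℝ) - 2)))
        - ε ^ ((N : ℝ) / 2 - 1) *
            ∫ x : EuclideanSpace ℝ (Fin N),
              (bubble N x) ^ (((N : ℝ) + 2) / ((N : ℝ) - 2))|
      ≤ C * ε ^ (((N : ℝ) + 2) / 2) / (1 - ‖y‖) ^ 2 := by
  obtain ⟨C, htail⟩ := setIntegral_compl_ball_bubble_rpow_critical_le hN
  refine ⟨max C 1, by positivity, fun y hy ε hε => ?_⟩
  have hd : 0 < 1 - ‖y‖ := by linarith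
  rw [setIntegral_ball_bubbleScaled_rpow_critical hN y hε,
    ← integral_add_compl measurableSet_ball (integrable_bubble_rpow_critical hN), mul_add,
    sub_add_cancel_left, abs_neg, abs_of_nonneg (mul_nonneg (by positivity)
      (setIntegral_nonneg measurableSet_ball.compl fun z _ =>
        Real.rpow_nonneg (bubble_nonneg (by omega) z) _))]
  calc ε ^ ((N : ℝ) / 2 - 1) * ∫ z in (ball 0 ((1 - ‖y‖) / ε))ᶜ,
          bubble N z ^ (((N : ℝ) + 2) / ((N : ℝ) - 2))
      ≤ ε ^ ((N : ℝ) / 2 - 1) * (max C 1 / ((1 - ‖y‖) / ε) ^ 2) := by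
        gcongr
        exact (htail _ (div_pos hd hε)).trans (by gcongr; exact le_max_left C 1)
    _ = max C 1 * (ε ^ ((N : ℝ) / 2 - 1) * ε ^ (2 : ℝ)) / (1 - ‖y‖) ^ 2 := by
        rw [Real.rpow_two]; field_simp
    _ = max C 1 * ε ^ (((N : ℝ) + 2) / 2) / (1 - ‖y‖) ^ 2 := by
        rw [← Real.rpow_add hε]; ring_nf
end
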